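/- arXiv:2402.06672 — 3 statements merged into one kernel-verified Lean document; each statement's English description precedes it below -/
import Mathlib

section
/- Let E be a real Banach space and let F, G ⊆ E* be linear subspaces of the continuous dual that are both weak-star closed (closed in the topology of pointwise convergence on E), such that F is finite-dimensional and E* = F ⊕ G. Then E = F₀ ⊕ G₀, where F₀ and G₀ denote the pre-annihilators of F and G in E; that is, F₀ ∩ G₀ = {0} and F₀ + G₀ = E. -/
open NormedSpace

noncomputable section

/-- The annihilator of a subspace `W ⊆ E` in the continuous dual `E*`. -/
def ann {E : Type*} [NormedAddCommGroup E] [NormedSpace ℝ E]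
    (W : Submodule ℝ E) : Submodule ℝ (StrongDual ℝ E) where
  carrier := {ℓ | ∀ w ∈ W, ℓ w = 0}
  add_mem' := by
    intro a b ha hb w hw
    simp [ha w hw, hb w hw]
  zero_mem' := by
    intro w hw
    simp
  smul_mem' := by
    intro c ℓ hℓ w hw
    simp [hℓ w hw]

/-- The pre-annihilator of a subspace `H ⊆ E*` in `E`. -/
def preAnn {E : Type*} [NormedAddCommGroup E] [NormedSpace ℝ E]
    (H : Submodule ℝ (StrongDual ℝ E)) : Submodule ℝ E where
  carrier := {x | ∀ ℓ ∈ H, ℓ x = 0}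
  add_mem' := by
    intro a b ha hb ℓ hℓ
    simp [ha ℓ hℓ, hb ℓ hℓ]
  zero_mem' := by
    intro ℓ hℓ
    simp
  smul_mem' := by
    intro c x hx ℓ hℓ
    simp [hx ℓ hℓ]

/-- A subspace of the continuous dual is weak-star closed if its image in `WeakDual ℝ E`
(the dual with the topology of pointwise convergence on `E`) is closed. -/
def IsWeakStarClosed {E : Type*} [NormedAddCommGroup E] [NormedSpace ℝ E]
    (H : Submodule ℝ (StrongDual ℝ E)) : Prop :=
  IsClosed (StrongDual.toWeakDual '' (H : Set (StrongDual ℝ E)))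

/-- The relative projection constant of a subspace `W` of a normed space `Y`:
the infimum of the operator norms of continuous linear projections of `Y` onto `W`. -/
def relProjConst {Y : Type*} [NormedAddCommGroup Y] [NormedSpace ℝ Y]
    (W : Submodule ℝ Y) : ℝ :=
  sInf {c | ∃ P : Y →L[ℝ] Y, P.comp P = P ∧ LinearMap.range (P : Y →ₗ[ℝ] Y) = W ∧ ‖P‖ = c}

end

/-!
By the bipolar theorem, a weak-star closed `G` is the annihilator of `G₀`, so `F ∩ G = 0` says
that no nonzero functional of `F` vanishes on `G₀`. As `F` is finite-dimensional, restriction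
`G₀ → F*`, `v ↦ (f ↦ f v)`, is therefore onto: every `x ∈ E` agrees on `F` with some `v ∈ G₀`,
and `x = (x - v) + v ∈ F₀ + G₀`. Dually, `F₀ ∩ G₀` is killed by `F + G = E*`, hence is `0` by
Hahn–Banach.
-/

theorem Submodule.exists_dual_eq_zero_and_ne_zero_of_notMem {X : Type*} [AddCommGroup X]
    [Module ℝ X] [TopologicalSpace X] [IsTopologicalAddGroup X] [ContinuousSMul ℝ X]
    [LocallyConvexSpace ℝ X] {S : Submodule ℝ X} (hS : IsClosed (S : Set X)) {x : X}
    (hx : x ∉ S) : ∃ f : StrongDual ℝ X, (∀ a ∈ S, f a = 0) ∧ f x ≠ 0 := by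
  obtain ⟨f, u, hSu, hux⟩ := geometric_hahn_banach_closed_point S.convex hS hx
  have hu : 0 < u := by simpa using hSu 0 S.zero_mem
  -- a linear functional bounded above on a subspace vanishes on it
  have hfS : ∀ a ∈ S, f a = 0 := by
    intro a ha
    by_contra hfa
    have := hSu ((u / f a) • a) (S.smul_mem _ ha)
    rw [map_smul, smul_eq_mul, div_mul_cancel₀ _ hfa] at this
    exact lt_irrefl u this
  exact ⟨f, hfS, (hu.trans hux).ne'⟩

instance WeakDual.instLocallyConvexSpace {E : Type*} [NormedAddCommGroup E] [NormedSpace ℝ E] :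
    LocallyConvexSpace ℝ (WeakDual ℝ E) :=
  WeakBilin.locallyConvexSpace

section

variable {E : Type*} [NormedAddCommGroup E] [NormedSpace ℝ E]

@[simp]
theorem mem_preAnn {H : Submodule ℝ (StrongDual ℝ E)} {x : E} :
    x ∈ preAnn H ↔ ∀ ℓ ∈ H, ℓ x = 0 :=
  Iff.rfl

theorem preAnn_sup (F G : Submodule ℝ (StrongDual ℝ E)) :
    preAnn (F ⊔ G) = preAnn F ⊓ preAnn G := by
  ext x
  simp only [Submodule.mem_inf, mem_preAnn]
  refine ⟨fun h => ⟨fun f hf => h f (Submodule.mem_sup_left hf),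
    fun g hg => h g (Submodule.mem_sup_right hg)⟩, ?_⟩
  rintro ⟨hF, hG⟩ ℓ hℓ
  obtain ⟨f, hf, g, hg, rfl⟩ := Submodule.mem_sup.mp hℓ
  simp [hF f hf, hG g hg]

theorem preAnn_top : preAnn (⊤ : Submodule ℝ (StrongDual ℝ E)) = ⊥ :=
  (Submodule.eq_bot_iff _).mpr fun _ hx =>
    SeparatingDual.eq_zero_of_forall_dual_eq_zero fun ℓ => hx ℓ Submodule.mem_top

theorem IsWeakStarClosed.ann_preAnn {H : Submodule ℝ (StrongDual ℝ E)}
    (hH : IsWeakStarClosed H) : ann (preAnn H) = H := by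
  refine le_antisymm (fun ℓ hℓ => ?_) fun ℓ hℓ x hx => hx ℓ hℓ
  by_contra hℓH
  let H' := H.map (StrongDual.toWeakDual (𝕜 := ℝ) (E := E)).toLinearMap
  have hH' : IsClosed (H' : Set (WeakDual ℝ E)) := by
    rwa [Submodule.map_coe]
  have hℓH' : StrongDual.toWeakDual ℓ ∉ H' := fun ⟨g, hg, hgℓ⟩ =>
    hℓH (StrongDual.toWeakDual.injective hgℓ ▸ hg)
  obtain ⟨φ, hφH, hφℓ⟩ := Submodule.exists_dual_eq_zero_and_ne_zero_of_notMem hH' hℓH'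
  -- continuous functionals on the weak-star dual are evaluations at points of `E`
  obtain ⟨x, rfl⟩ := LinearMap.dualEmbedding_surjective (topDualPairing ℝ E) φ
  exact hφℓ (hℓ x fun g hg => hφH _ (Submodule.mem_map_of_mem hg))

theorem preAnn_sup_preAnn_eq_top {F G : Submodule ℝ (StrongDual ℝ E)} [FiniteDimensional ℝ F]
    (h : F ⊓ ann (preAnn G) = ⊥) : preAnn F ⊔ preAnn G = ⊤ := by
  let C : F →ₗ[ℝ] preAnn G →ₗ[ℝ] ℝ := (topDualPairing ℝ E).compl₁₂ F.subtype (preAnn G).subtype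
  have hC : Function.Injective C := by
    rw [injective_iff_map_eq_zero]
    intro f hf
    have : (f : StrongDual ℝ E) ∈ F ⊓ ann (preAnn G) :=
      ⟨f.2, fun x hx => LinearMap.congr_fun hf ⟨x, hx⟩⟩
    simpa [h] using this
  have hCsurj : Function.Surjective C.flip :=
    (LinearMap.flip_injective_iff₂ (V₁ := preAnn G) (V₂ := F)).mp hC
  refine Submodule.eq_top_iff'.mpr fun x => ?_
  obtain ⟨v, hv⟩ := hCsurj ((topDualPairing ℝ E).flip x ∘ₗ F.subtype)
  have hxv : x - v ∈ preAnn F := fun f hf => by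
    simpa [sub_eq_zero, C] using (LinearMap.congr_fun hv ⟨f, hf⟩).symm
  simpa using Submodule.add_mem_sup hxv v.2

end

theorem preAnn_decomposition_general (E : Type*) [NormedAddCommGroup E] [NormedSpace ℝ E]
    (F G : Submodule ℝ (StrongDual ℝ E))
    (hGc : IsWeakStarClosed G)
    (hFfd : FiniteDimensional ℝ F)
    (hinf : F ⊓ G = ⊥) (hsup : F ⊔ G = ⊤) :
    preAnn F ⊓ preAnn G = ⊥ ∧ preAnn F ⊔ preAnn G = ⊤ :=
  ⟨by rw [← preAnn_sup, hsup, preAnn_top], preAnn_sup_preAnn_eq_top (by rwa [hGc.ann_preAnn])⟩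

/-- If `F, G ⊆ E*` are weak-star closed subspaces with `F` finite-dimensional
and `E* = F ⊕ G`, then `E = F₀ ⊕ G₀`. -/
theorem preAnn_decomposition (E : Type*) [NormedAddCommGroup E] [NormedSpace ℝ E]
    [CompleteSpace E] (F G : Submodule ℝ (StrongDual ℝ E))
    (hFc : IsWeakStarClosed F) (hGc : IsWeakStarClosed G)
    (hFfd : FiniteDimensional ℝ F)
    (hinf : F ⊓ G = ⊥) (hsup : F ⊔ G = ⊤) :
    preAnn F ⊓ preAnn G = ⊥ ∧ preAnn F ⊔ preAnn G = ⊤ :=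
  preAnn_decomposition_general E F G hGc hFfd hinf hsup
end

section
/- Let f₁ = (1, 0, 1, 1, 1, …) and f₂ = (0, 1, 1, 1, 1, …) in ℓ∞, and let F₀ = {y ∈ ℓ¹ : ∑_{i} y(i) f₁(i) = 0 and ∑_{i} y(i) f₂(i) = 0}. Then for x ∈ c₀ (a real sequence converging to 0), one has ∑_{i} y(i) x(i) = 0 for all y ∈ F₀ if and only if x is a scalar multiple of the sequence (1, −1, 0, 0, 0, …). In other words, the subspace V = {x ∈ c₀ : ∑_i y(i) x(i) = 0 for all y ∈ F₀} of c₀ is the one-dimensional span of e₀ − e₁. -/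
open scoped ENNReal

noncomputable section

/-- The sequence `(1, 0, 1, 1, 1, …)`. -/
def f₁fn : ℕ → ℝ := fun i => if i = 1 then 0 else 1

/-- The sequence `(0, 1, 1, 1, 1, …)`. -/
def f₂fn : ℕ → ℝ := fun i => if i = 0 then 0 else 1

/-- `(1, 0, 1, 1, 1, …)` as an element of `ℓ∞`. -/
def f₁ : lp (fun _ : ℕ => ℝ) ∞ :=
  ⟨f₁fn, memℓp_infty ⟨1, by rintro r ⟨i, rfl⟩; simp only [f₁fn]; split <;> simp⟩⟩

/-- `(0, 1, 1, 1, 1, …)` as an element of `ℓ∞`. -/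
def f₂ : lp (fun _ : ℕ => ℝ) ∞ :=
  ⟨f₂fn, memℓp_infty ⟨1, by rintro r ⟨i, rfl⟩; simp only [f₂fn]; split <;> simp⟩⟩

/-- The subspace `G = {x ∈ ℓ∞ : x 0 = 0 ∧ x 1 = 0}`. -/
def Gsub : Submodule ℝ (lp (fun _ : ℕ => ℝ) ∞) where
  carrier := {x | x 0 = 0 ∧ x 1 = 0}
  add_mem' := by
    rintro a b ⟨ha0, ha1⟩ ⟨hb0, hb1⟩
    constructor <;> simp [lp.coeFn_add, ha0, ha1, hb0, hb1]
  zero_mem' := by constructor <;> simp [lp.coeFn_zero]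
  smul_mem' := by
    rintro c x ⟨h0, h1⟩
    constructor <;> simp [lp.coeFn_smul, h0, h1]

end

/-- The sequence `e₀ - e₁ = (1, -1, 0, 0, …)`. -/
noncomputable def e01fn : ℕ → ℝ := fun i => if i = 0 then 1 else if i = 1 then -1 else 0


/-- Auxiliary: the test sequence `e₀ + e₁ - e_k`. -/
noncomputable def yfn (k : ℕ) : ℕ → ℝ :=
  fun i => if i = 0 then 1 else if i = 1 then 1 else if i = k then -1 else 0

lemma yfn_memℓp (k : ℕ) : Memℓp (yfn k) 1 := by
  apply memℓp_gen
  apply summable_of_ne_finset_zero (s := {0, 1, k})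
  intro i hi
  simp only [Finset.mem_insert, Finset.mem_singleton, not_or] at hi
  simp [yfn, hi.1, hi.2.1, hi.2.2]

lemma summable_mul_bounded (y : lp (fun _ : ℕ => ℝ) 1) (g : ℕ → ℝ)
    (hg : ∀ i, |g i| ≤ 1) : Summable fun i => (y : ℕ → ℝ) i * g i := by
  have hy : Summable fun i => ‖(y : ℕ → ℝ) i‖ := by
    simpa using (lp.memℓp y).summable (by norm_num)
  apply Summable.of_norm
  apply hy.of_nonneg_of_le (fun i => norm_nonneg _)
  intro i
  rw [norm_mul]
  calc ‖(y : ℕ → ℝ) i‖ * ‖g i‖ ≤ ‖(y : ℕ → ℝ) i‖ * 1 := by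
        exact mul_le_mul_of_nonneg_left (by simpa [Real.norm_eq_abs] using hg i)
          (norm_nonneg _)
    _ = ‖(y : ℕ → ℝ) i‖ := mul_one _

/-- For a sequence `x ∈ c₀` (i.e. converging to `0`), `x` is annihilated by every
`y ∈ F₀ = {y ∈ ℓ¹ : ⟨y, f₁⟩ = ⟨y, f₂⟩ = 0}` if and only if `x` is a scalar
multiple of `e₀ - e₁ = (1, -1, 0, 0, …)`. -/
theorem mem_preAnn_iff_span (x : ℕ → ℝ)
    (hx : Filter.Tendsto x Filter.atTop (nhds 0)) :
    (∀ y : lp (fun _ : ℕ => ℝ) 1,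
        (∑' i, y i * f₁fn i = 0 ∧ ∑' i, y i * f₂fn i = 0) → ∑' i, y i * x i = 0) ↔
      ∃ c : ℝ, x = c • e01fn := by
  constructor
  · intro h
    refine ⟨x 0, ?_⟩
    -- use the test functionals yfn k for k ≥ 2
    have key : ∀ k : ℕ, 2 ≤ k → x 0 + x 1 - x k = 0 := by
      intro k hk
      have hk0 : k ≠ 0 := by omega
      have hk1 : k ≠ 1 := by omega
      set y : lp (fun _ : ℕ => ℝ) 1 := ⟨yfn k, yfn_memℓp k⟩ with hy
      have hco : (y : ℕ → ℝ) = yfn k := rfl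
      have htsum : ∀ g : ℕ → ℝ, ∑' i, (y : ℕ → ℝ) i * g i
          = g 0 + g 1 - g k := by
        intro g
        rw [tsum_eq_sum (s := {0, 1, k}) (f := fun i => (y : ℕ → ℝ) i * g i)]
        · rw [Finset.sum_insert (by simp [hk0.symm]),
            Finset.sum_insert (by simp [hk1.symm]), Finset.sum_singleton]
          simp only [hco, yfn]
          norm_num [hk0, hk1]
          ring
        · intro i hi
          simp only [Finset.mem_insert, Finset.mem_singleton, not_or] at hi
          simp [hco, yfn, hi.1, hi.2.1, hi.2.2]
      have h1 : ∑' i, (y : ℕ → ℝ) i * f₁fn i = 0 := by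
        rw [htsum]; simp [f₁fn, hk1]
      have h2 : ∑' i, (y : ℕ → ℝ) i * f₂fn i = 0 := by
        rw [htsum]; simp [f₂fn, hk0]
      have := h y ⟨h1, h2⟩
      rwa [htsum] at this
    have hconst : Filter.Tendsto (fun _ : ℕ => x 0 + x 1) Filter.atTop (nhds 0) := by
      have : ∀ᶠ k in Filter.atTop, x k = x 0 + x 1 := by
        filter_upwards [Filter.eventually_ge_atTop 2] with k hk
        have := key k hk; linarith
      exact hx.congr' this
    have hsum0 : x 0 + x 1 = 0 := (tendsto_nhds_unique hconst tendsto_const_nhds).symm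
    funext i
    simp only [Pi.smul_apply, smul_eq_mul, e01fn]
    rcases i with _ | _ | i
    · simp
    · simp; linarith
    · have : x (i + 2) = 0 := by have := key (i + 2) (by omega); linarith
      simpa using this
  · rintro ⟨c, rfl⟩ y ⟨h1, h2⟩
    have hs1 : Summable fun i => (y : ℕ → ℝ) i * f₁fn i :=
      summable_mul_bounded y _ (fun i => by simp only [f₁fn]; split <;> norm_num)
    have hs2 : Summable fun i => (y : ℕ → ℝ) i * f₂fn i :=
      summable_mul_bounded y _ (fun i => by simp only [f₂fn]; split <;> norm_num)
    have hdiff : ∑' i, ((y : ℕ → ℝ) i * f₁fn i - (y : ℕ → ℝ) i * f₂fn i) = 0 := by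
      rw [Summable.tsum_sub hs1 hs2, h1, h2, sub_zero]
    have heq : (fun i => (y : ℕ → ℝ) i * f₁fn i - (y : ℕ → ℝ) i * f₂fn i)
        = fun i => (y : ℕ → ℝ) i * e01fn i := by
      funext i
      rcases i with _ | _ | i <;> simp [f₁fn, f₂fn, e01fn] <;> ring
    rw [heq] at hdiff
    have : (fun i => (y : ℕ → ℝ) i * (c • e01fn) i)
        = fun i => c * ((y : ℕ → ℝ) i * e01fn i) := by
      funext i; simp [mul_comm, mul_assoc, mul_left_comm]
    rw [this, tsum_mul_left, hdiff, mul_zero]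
end

section
/- Let f₁ = (1, 0, 1, 1, 1, …) and f₂ = (0, 1, 1, 1, 1, …) in ℓ∞ and let F be their linear span. Then λ(F, ℓ∞) > 1; that is, inf{‖P‖ : P : ℓ∞ → ℓ∞ continuous linear, P ∘ P = P, range(P) = F} > 1. In particular, there exists no continuous linear projection of ℓ∞ onto F of operator norm 1. -/
/-!
Let `P` be a projection onto `F` and let `ψₖ = (P ·)ₖ` for `k = 0, 1, 2`. Every element of `F` has
third coordinate equal to the sum of the first two, so `ψ₂ = ψ₀ + ψ₁`. Test the `ψₖ` on
`e₀ = (1, 0, 0, …)`, `e₁ = (0, 1, 0, …)` and `u = (0, 0, 1, 1, …)`: all combinations `±e₀ ± e₁ ± u` have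
norm at most one, so `|ψₖ e₀| + |ψₖ e₁| + |ψₖ u| ≤ ‖P‖`. Since `P` fixes `f₁ = e₀ + u` and `f₂ = e₁ + u`, we have
`ψ₀ f₁ = ψ₁ f₂ = 1`, and these three bounds already force `‖P‖ ≥ 4/3`. Finally `F` is
finite-dimensional, hence complemented, so the infimum defining `λ(F, ℓ∞)` is not over the empty set.
-/

open scoped ENNReal

noncomputable section

open scoped lp

theorem sum_abs_apply_single_le_opNorm {ι : Type*} [Fintype ι] [DecidableEq ι]
    (φ : (ι → ℝ) →L[ℝ] ℝ) : ∑ i, |φ (Pi.single i 1)| ≤ ‖φ‖ := by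
  set ε : ι → ℝ := fun i => SignType.sign (φ (Pi.single i 1))
  have hε : ‖ε‖ ≤ 1 := (pi_norm_le_iff_of_nonneg zero_le_one).2 fun i => by
    simp only [ε, Real.norm_eq_abs]
    cases SignType.sign (φ (Pi.single i 1)) <;> simp
  have hφε : φ ε = ∑ i, ε i * φ (Pi.single i 1) := by
    conv_lhs => rw [← Finset.univ_sum_single ε]
    rw [map_sum]
    refine Finset.sum_congr rfl fun i _ => ?_
    rw [← smul_eq_mul, ← map_smul, ← Pi.single_smul, smul_eq_mul, mul_one]
  calc ∑ i, |φ (Pi.single i 1)| = φ ε := by simp only [hφε, ε, sign_mul_self]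
    _ ≤ ‖φ ε‖ := Real.le_norm_self _
    _ ≤ ‖φ‖ * ‖ε‖ := φ.le_opNorm ε
    _ ≤ ‖φ‖ := mul_le_of_le_one_right (norm_nonneg φ) hε

section Pullback

variable {𝕜 E α ι : Type*} [NontriviallyNormedField 𝕜] [NormedAddCommGroup E] [NormedSpace 𝕜 E]
  [Fintype ι]

def lpInftyPullback (r : α → ι) : (ι → E) →L[𝕜] ℓ^∞(α, E) :=
  LinearMap.mkContinuous
    { toFun := fun x => ⟨x ∘ r, memℓp_infty ⟨‖x‖, by rintro _ ⟨n, rfl⟩; exact norm_le_pi_norm x (r n)⟩⟩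
      map_add' := fun _ _ => rfl
      map_smul' := fun _ _ => rfl } 1
    fun x => by
      rw [one_mul]
      exact lp.norm_le_of_forall_le (norm_nonneg x) fun n => norm_le_pi_norm x (r n)

@[simp]
theorem lpInftyPullback_apply (r : α → ι) (x : ι → E) (a : α) :
    (lpInftyPullback (𝕜 := 𝕜) r x : α → E) a = x (r a) := rfl

theorem opNorm_lpInftyPullback_le (r : α → ι) :
    ‖(lpInftyPullback r : (ι → E) →L[𝕜] ℓ^∞(α, E))‖ ≤ 1 :=
  LinearMap.mkContinuous_norm_le _ zero_le_one _

theorem sum_abs_evalCLM_comp_le_opNorm [DecidableEq ι] {β : Type*}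
    (T : ℓ^∞(α, ℝ) →L[ℝ] ℓ^∞(β, ℝ)) (r : α → ι) (b : β) :
    ∑ i, |(lp.evalCLM ℝ (fun _ : β => ℝ) ∞ b ∘L T ∘L lpInftyPullback r) (Pi.single i 1)| ≤ ‖T‖ :=
  calc _ ≤ ‖lp.evalCLM ℝ (fun _ : β => ℝ) ∞ b ∘L T ∘L lpInftyPullback r‖ :=
        sum_abs_apply_single_le_opNorm _
    _ ≤ 1 * (‖T‖ * 1) := by
      refine (ContinuousLinearMap.opNorm_comp_le _ _).trans (mul_le_mul ?_ ?_ (by positivity) zero_le_one)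
      · exact LinearMap.mkContinuous_norm_le _ zero_le_one _
      · exact (ContinuousLinearMap.opNorm_comp_le _ _).trans
          (mul_le_mul_of_nonneg_left (opNorm_lpInftyPullback_le r) (norm_nonneg T))
    _ = ‖T‖ := by ring

end Pullback

theorem le_relProjConst {Y : Type*} [NormedAddCommGroup Y] [NormedSpace ℝ Y]
    {W : Submodule ℝ Y} [FiniteDimensional ℝ W] {C : ℝ}
    (h : ∀ P : Y →L[ℝ] Y, P.comp P = P → LinearMap.range (P : Y →ₗ[ℝ] Y) = W → C ≤ ‖P‖) :
    C ≤ relProjConst W := by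
  obtain ⟨Q, hQ⟩ := Submodule.ClosedComplemented.of_finiteDimensional W
  have hQW : ∀ x ∈ W, W.subtypeL (Q x) = x := fun x hx => congrArg Subtype.val (hQ ⟨x, hx⟩)
  refine le_csInf ⟨_, W.subtypeL ∘L Q, ?_, ?_, rfl⟩ fun c ⟨P, hPP, hPW, hc⟩ => hc ▸ h P hPP hPW
  · ext x
    exact congrArg Subtype.val (hQ (Q x))
  · refine le_antisymm ?_ fun x hx => ⟨x, hQW x hx⟩
    rintro _ ⟨x, rfl⟩
    exact (Q x).2

theorem four_thirds_le_of_abs_sum_le {x₀ x₁ x₂ y₀ y₁ y₂ N : ℝ}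
    (hx₀ : x₀ + x₂ = 1) (hy₁ : y₁ + y₂ = 1)
    (hx : |x₀| + |x₁| + |x₂| ≤ N) (hy : |y₀| + |y₁| + |y₂| ≤ N)
    (hxy : |x₀ + y₀| + |x₁ + y₁| + |x₂ + y₂| ≤ N) : 4 / 3 ≤ N := by
  linarith [le_abs_self x₀, neg_abs_le x₀, le_abs_self x₁, neg_abs_le x₁, le_abs_self x₂, neg_abs_le x₂,
    le_abs_self y₀, neg_abs_le y₀, le_abs_self y₁, neg_abs_le y₁, le_abs_self y₂, neg_abs_le y₂,
    le_abs_self (x₀ + y₀), neg_abs_le (x₀ + y₀), le_abs_self (x₁ + y₁), neg_abs_le (x₁ + y₁),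
    le_abs_self (x₂ + y₂), neg_abs_le (x₂ + y₂)]

/-- `lpInftyPullback clampTwo (Pi.single j 1)` for `j = 0, 1, 2` are the vectors `e₀, e₁, u`. -/
def clampTwo (n : ℕ) : Fin 3 := ⟨min n 2, by omega⟩

theorem f₁_eq_lpInftyPullback : f₁ = lpInftyPullback (𝕜 := ℝ) clampTwo ![1, 0, 1] :=
  lp.ext <| funext fun n => by rcases n with _ | _ | n <;> simp [f₁, f₁fn, clampTwo]

theorem f₂_eq_lpInftyPullback : f₂ = lpInftyPullback (𝕜 := ℝ) clampTwo ![0, 1, 1] :=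
  lp.ext <| funext fun n => by rcases n with _ | _ | n <;> simp [f₂, f₂fn, clampTwo]

theorem apply_two_eq_add_of_mem_span {w : ℓ^∞(ℕ, ℝ)} (hw : w ∈ Submodule.span ℝ {f₁, f₂}) :
    w 2 = w 0 + w 1 := by
  obtain ⟨a, b, rfl⟩ := Submodule.mem_span_pair.mp hw
  change a * f₁fn 2 + b * f₂fn 2 = a * f₁fn 0 + b * f₂fn 0 + (a * f₁fn 1 + b * f₂fn 1)
  norm_num [f₁fn, f₂fn]

theorem four_thirds_le_opNorm_of_range_eq_span {P : ℓ^∞(ℕ, ℝ) →L[ℝ] ℓ^∞(ℕ, ℝ)}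
    (hP : P.comp P = P)
    (hrange : LinearMap.range (P : ℓ^∞(ℕ, ℝ) →ₗ[ℝ] ℓ^∞(ℕ, ℝ)) = Submodule.span ℝ {f₁, f₂}) :
    4 / 3 ≤ ‖P‖ := by
  have hfix : ∀ w ∈ Submodule.span ℝ {f₁, f₂}, P w = w := by
    intro w hw
    obtain ⟨x, rfl⟩ := hrange ▸ hw
    exact congr($hP x)
  let L := lpInftyPullback (𝕜 := ℝ) (E := ℝ) clampTwo
  let ψ (k : ℕ) : (Fin 3 → ℝ) →L[ℝ] ℝ := lp.evalCLM ℝ (fun _ : ℕ => ℝ) ∞ k ∘L P ∘L L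
  have hψ (k : ℕ) : ∑ j, |ψ k (Pi.single j 1)| ≤ ‖P‖ := sum_abs_evalCLM_comp_le_opNorm P clampTwo k
  have hψ₂ (j : Fin 3) : ψ 2 (Pi.single j 1) = ψ 0 (Pi.single j 1) + ψ 1 (Pi.single j 1) :=
    apply_two_eq_add_of_mem_span (hrange ▸ LinearMap.mem_range_self _ _)
  have hψ_fix (v : Fin 3 → ℝ) (hv : L v ∈ Submodule.span ℝ {f₁, f₂}) (k : ℕ) :
      ψ k v = v (clampTwo k) :=
    congr($(hfix _ hv) k)
  have hf₁ : ψ 0 (Pi.single 0 1) + ψ 0 (Pi.single 2 1) = 1 := by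
    have h : (Pi.single 0 1 + Pi.single 2 1 : Fin 3 → ℝ) = ![1, 0, 1] := by
      ext j; fin_cases j <;> simp
    rw [← map_add, h, hψ_fix _ (f₁_eq_lpInftyPullback ▸ Submodule.subset_span (by simp))]
    rfl
  have hf₂ : ψ 1 (Pi.single 1 1) + ψ 1 (Pi.single 2 1) = 1 := by
    have h : (Pi.single 1 1 + Pi.single 2 1 : Fin 3 → ℝ) = ![0, 1, 1] := by
      ext j; fin_cases j <;> simp
    rw [← map_add, h, hψ_fix _ (f₂_eq_lpInftyPullback ▸ Submodule.subset_span (by simp))]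
    rfl
  have h₀ := hψ 0
  have h₁ := hψ 1
  have h₂ := hψ 2
  simp only [Fin.sum_univ_three, hψ₂] at h₀ h₁ h₂
  exact four_thirds_le_of_abs_sum_le hf₁ hf₂ h₀ h₁ h₂

/-- For `F = span {f₁, f₂} ⊆ ℓ∞`, the relative projection constant satisfies
`λ(F, ℓ∞) > 1`; in particular there is no norm-one projection of `ℓ∞` onto `F`. -/
theorem one_lt_relProjConst_span :
    1 < relProjConst (Submodule.span ℝ {f₁, f₂}) ∧
      ¬∃ P : lp (fun _ : ℕ => ℝ) ∞ →L[ℝ] lp (fun _ : ℕ => ℝ) ∞,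
        P.comp P = P ∧ LinearMap.range (P : lp (fun _ : ℕ => ℝ) ∞ →ₗ[ℝ] lp (fun _ : ℕ => ℝ) ∞) = Submodule.span ℝ {f₁, f₂} ∧ ‖P‖ = 1 := by
  have : FiniteDimensional ℝ (Submodule.span ℝ {f₁, f₂}) :=
    FiniteDimensional.span_of_finite ℝ (Set.toFinite _)
  have hconst : 4 / 3 ≤ relProjConst (Submodule.span ℝ {f₁, f₂}) :=
    le_relProjConst fun _ hP hrange => four_thirds_le_opNorm_of_range_eq_span hP hrange
  refine ⟨by linarith, ?_⟩
  rintro ⟨P, hP, hrange, hnorm⟩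
  linarith [four_thirds_le_opNorm_of_range_eq_span hP hrange]

end
end
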